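/- Let L ≥ 1 and let K be an L×L integer matrix with K·Kᵀ = m·I_L where m is an even positive integer. Then for every vector P ∈ ℝ^L all of whose entries are ±1/2, the vector P·K has all entries in ℤ. (Consequently every deep hole of ℤ^L belongs to the lattice (1/m)·ℤ^L·Kᵀ, so the similar sublattice spanned by the rows of K is not clean.) -/

import Mathlib

/-! Write a deep hole as `ε / 2` with every `ε k` odd. The `j`-th entry of `(ε / 2) K` is half of
`∑ ε_k K_kj ≡ ∑ K_kj² = (KᵀK)_jj = m (mod 2)`, hence an integer.

The map `v ↦ vK` multiplies squared lengths by `m`, so the points of the row lattice nearest to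
`x = (1/2, …, 1/2) K ∈ ℤ^L` are the images of the integer vectors nearest to `(1/2, …, 1/2)`.
Among these are `0` and `e₁`, whose images `0` and the first row of `K` differ. -/

/-- The integer lattice `ℤ^L` inside `EuclideanSpace ℝ (Fin L)`:
the `ℤ`-span of the standard basis vectors. -/
noncomputable def Zlat (L : ℕ) : AddSubgroup (EuclideanSpace ℝ (Fin L)) :=
  AddSubgroup.closure (Set.range fun i => EuclideanSpace.single i (1 : ℝ))

/-- The `ℤ`-span of the rows of an integer matrix `K`, as a sublattice of `ℝ^L`. -/
noncomputable def rowLattice {L : ℕ} (K : Matrix (Fin L) (Fin L) ℤ) :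
    AddSubgroup (EuclideanSpace ℝ (Fin L)) :=
  AddSubgroup.closure
    (Set.range fun i => (WithLp.equiv 2 (Fin L → ℝ)).symm fun j => (K i j : ℝ))

/-- `Λ'` is clean in `Λ`: every point of `Λ` has a unique nearest point of `Λ'`
in the Euclidean norm. -/
def IsClean {L : ℕ} (Λ Λ' : AddSubgroup (EuclideanSpace ℝ (Fin L))) : Prop :=
  ∀ x ∈ Λ, ∃! p, p ∈ Λ' ∧ ∀ q ∈ Λ', ‖x - p‖ ≤ ‖x - q‖

open Matrix

namespace Matrix

variable {n R : Type*} [Fintype n]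

theorem mul_eq_smul_one_comm [DecidableEq n] [CommRing R] [IsDomain R] {A B : Matrix n n R}
    {c : R} (hc : c ≠ 0) (h : A * B = c • 1) : B * A = c • 1 := by
  have hdet : B.det ≠ 0 := by
    intro h0
    have := congrArg det h
    rw [det_mul, h0, mul_zero, det_smul, det_one, mul_one] at this
    exact pow_ne_zero _ hc this.symm
  have hkill : (B * A - c • 1) * B = 0 := by
    rw [Matrix.sub_mul, Matrix.mul_assoc, h, Matrix.mul_smul, Matrix.smul_mul, Matrix.mul_one,
      Matrix.one_mul, sub_self]
  have : B.det • (B * A - c • 1) = 0 := by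
    rw [← Matrix.mul_one (B * A - c • 1), ← Matrix.mul_smul, ← mul_adjugate, ← Matrix.mul_assoc,
      hkill, Matrix.zero_mul]
  exact sub_eq_zero.1 ((smul_eq_zero.1 this).resolve_left hdet)

theorem dotProduct_vecMul_self_of_mul_transpose [DecidableEq n] [CommSemiring R]
    {A : Matrix n n R} {c : R} (h : A * Aᵀ = c • 1) (v : n → R) :
    (v ᵥ* A) ⬝ᵥ (v ᵥ* A) = c * (v ⬝ᵥ v) := by
  rw [← dotProduct_vecMul_transpose, vecMul_vecMul, h, vecMul_smul, vecMul_one, smul_dotProduct,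
    smul_eq_mul]

end Matrix

theorem EuclideanSpace.norm_sq_toLp_vecMul {n : Type*} [Fintype n] [DecidableEq n]
    {A : Matrix n n ℝ} {c : ℝ} (h : A * Aᵀ = c • 1) (v : n → ℝ) :
    ‖WithLp.toLp 2 (v ᵥ* A)‖ ^ 2 = c * (v ⬝ᵥ v) := by
  rw [EuclideanSpace.real_norm_sq_eq, ← Matrix.dotProduct_vecMul_self_of_mul_transpose h]
  simp [dotProduct, sq]

theorem Int.even_sum_mul_of_odd {ι : Type*} {s : Finset ι} {ε a : ι → ℤ}
    (hε : ∀ i ∈ s, Odd (ε i)) (ha : Even (∑ i ∈ s, a i * a i)) :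
    Even (∑ i ∈ s, ε i * a i) := by
  have hsplit : ∑ i ∈ s, ε i * a i = ∑ i ∈ s, a i * a i + ∑ i ∈ s, a i * (ε i - a i) := by
    rw [← Finset.sum_add_distrib]
    exact Finset.sum_congr rfl fun i _ => by ring
  rw [hsplit]
  refine ha.add (Finset.even_sum _ fun i hi => ?_)
  rcases Int.even_or_odd (a i) with h | h
  · exact h.mul_right _
  · exact ((hε i hi).sub_odd h).mul_left _

def IsDeepHole {ι : Type*} (P : ι → ℝ) : Prop :=
  ∀ i, ∃ e : ℤ, Odd e ∧ P i = e / 2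

theorem IsDeepHole.exists_intCast_eq_vecMul {ι : Type*} [Fintype ι] [DecidableEq ι] {P : ι → ℝ}
    (hP : IsDeepHole P) {K : Matrix ι ι ℤ} {m : ℤ} (hm : m ≠ 0) (hmEven : Even m)
    (hK : K * Kᵀ = m • 1) (j : ι) : ∃ n : ℤ, (P ᵥ* K.map (Int.cast : ℤ → ℝ)) j = n := by
  choose ε hε hPε using hP
  have hcol : ∑ k, K k j * K k j = m := by
    simpa [mul_apply] using congrFun (congrFun (mul_eq_smul_one_comm hm hK) j) j
  obtain ⟨n, hn⟩ := Int.even_sum_mul_of_odd (fun k _ => hε k) (hcol ▸ hmEven)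
  refine ⟨n, ?_⟩
  have hnR : ∑ k, (ε k : ℝ) * K k j = n + n := by exact_mod_cast hn
  simp only [vecMul, dotProduct, map_apply, hPε, div_mul_eq_mul_div, ← Finset.sum_div, hnR]
  ring

theorem Zlat_eq_rowLattice_one (L : ℕ) : Zlat L = rowLattice 1 := by
  unfold Zlat rowLattice
  congr
  ext i j
  simp [one_apply, eq_comm]

theorem mem_rowLattice_iff {L : ℕ} {K : Matrix (Fin L) (Fin L) ℤ} {q : EuclideanSpace ℝ (Fin L)} :
    q ∈ rowLattice K ↔
      ∃ z : Fin L → ℤ, q = WithLp.toLp 2 ((fun i => (z i : ℝ)) ᵥ* K.map Int.cast) := by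
  rw [rowLattice, AddSubgroup.mem_closure_range_iff_of_fintype]
  refine exists_congr fun z => ?_
  rw [vecMul_eq_sum, WithLp.toLp_sum]
  simp only [WithLp.equiv_symm_apply, ← Int.cast_smul_eq_zsmul ℝ, WithLp.toLp_smul]
  rfl

theorem sq_half_le_sq_half_sub_intCast (t : ℤ) : (1 / 2 : ℝ) ^ 2 ≤ (1 / 2 - t) ^ 2 := by
  have : (0 : ℤ) ≤ t * (t - 1) := by
    rcases le_or_gt t 0 with h | h <;> nlinarith
  have : (0 : ℝ) ≤ t * (t - 1) := by exact_mod_cast this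
  nlinarith

theorem sum_sq_half_sub_le {ι : Type*} [Fintype ι] {z : ι → ℤ} (hz : ∀ i, z i = 0 ∨ z i = 1)
    (w : ι → ℤ) : ∑ i, (1 / 2 - (z i : ℝ)) ^ 2 ≤ ∑ i, (1 / 2 - (w i : ℝ)) ^ 2 := by
  refine Finset.sum_le_sum fun i _ => le_of_eq_of_le ?_ (sq_half_le_sq_half_sub_intCast (w i))
  rcases hz i with h | h <;> norm_num [h]

theorem IsDeepHole.toLp_vecMul_mem_Zlat {L : ℕ} {P : Fin L → ℝ} (hP : IsDeepHole P)
    {K : Matrix (Fin L) (Fin L) ℤ} {m : ℤ} (hm : m ≠ 0) (hmEven : Even m) (hK : K * Kᵀ = m • 1) :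
    WithLp.toLp 2 (P ᵥ* K.map Int.cast) ∈ Zlat L := by
  choose n hn using hP.exists_intCast_eq_vecMul hm hmEven hK
  rw [Zlat_eq_rowLattice_one, mem_rowLattice_iff]
  exact ⟨n, by ext j; simpa using hn j⟩

theorem norm_half_sub_le_of_mul_transpose {n : Type*} [Fintype n] [DecidableEq n]
    {A : Matrix n n ℝ} {c : ℝ} (hc : 0 ≤ c) (hA : A * Aᵀ = c • 1) {z : n → ℤ}
    (hz : ∀ i, z i = 0 ∨ z i = 1) (w : n → ℤ) :
    ‖WithLp.toLp 2 ((fun _ => 1 / 2) ᵥ* A) - WithLp.toLp 2 ((fun i => (z i : ℝ)) ᵥ* A)‖ ≤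
      ‖WithLp.toLp 2 ((fun _ => 1 / 2) ᵥ* A) - WithLp.toLp 2 ((fun i => (w i : ℝ)) ᵥ* A)‖ := by
  have hdist : ∀ v : n → ℤ,
      ‖WithLp.toLp 2 ((fun _ => 1 / 2) ᵥ* A) - WithLp.toLp 2 ((fun i => (v i : ℝ)) ᵥ* A)‖ ^ 2 =
        c * ∑ i, (1 / 2 - (v i : ℝ)) ^ 2 := by
    intro v
    rw [← WithLp.toLp_sub, ← sub_vecMul, EuclideanSpace.norm_sq_toLp_vecMul hA]
    simp [dotProduct, sq]
  rw [← pow_le_pow_iff_left₀ (norm_nonneg _) (norm_nonneg _) two_ne_zero, hdist, hdist]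
  exact mul_le_mul_of_nonneg_left (sum_sq_half_sub_le hz w) hc

theorem not_isClean_Zlat_rowLattice {L : ℕ} (hL : 1 ≤ L) {K : Matrix (Fin L) (Fin L) ℤ} {m : ℕ}
    (hm : 0 < m) (hmEven : Even m) (hK : K * Kᵀ = (m : ℤ) • 1) :
    ¬ IsClean (Zlat L) (rowLattice K) := by
  set A := K.map (Int.cast : ℤ → ℝ)
  have hA : A * Aᵀ = (m : ℝ) • 1 := by
    have := congrArg (Int.castRingHom ℝ).mapMatrix hK
    rwa [map_mul, map_zsmul, map_one, RingHom.mapMatrix_apply, RingHom.mapMatrix_apply,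
      transpose_map, ← Int.cast_smul_eq_zsmul ℝ, Int.cast_natCast] at this
  have hx : WithLp.toLp 2 ((fun _ => 1 / 2) ᵥ* A) ∈ Zlat L :=
    IsDeepHole.toLp_vecMul_mem_Zlat (fun _ => ⟨1, odd_one, by norm_num⟩)
      (by exact_mod_cast hm.ne') hmEven.natCast hK
  have hnearest : ∀ z : Fin L → ℤ, (∀ i, z i = 0 ∨ z i = 1) →
      WithLp.toLp 2 ((fun i => (z i : ℝ)) ᵥ* A) ∈ rowLattice K ∧ ∀ q ∈ rowLattice K,
        ‖WithLp.toLp 2 ((fun _ => 1 / 2) ᵥ* A) - WithLp.toLp 2 ((fun i => (z i : ℝ)) ᵥ* A)‖ ≤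
          ‖WithLp.toLp 2 ((fun _ => 1 / 2) ᵥ* A) - q‖ := by
    refine fun z hz => ⟨mem_rowLattice_iff.2 ⟨z, rfl⟩, fun q hq => ?_⟩
    obtain ⟨w, rfl⟩ := mem_rowLattice_iff.1 hq
    exact norm_half_sub_le_of_mul_transpose m.cast_nonneg hA hz w
  intro hclean
  obtain ⟨p, -, hp⟩ := hclean _ hx
  let e : Fin L → ℤ := Pi.single ⟨0, hL⟩ 1
  have he : ∀ i, e i = 0 ∨ e i = 1 := fun i => by
    by_cases h : i = ⟨0, hL⟩ <;> simp [e, h]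
  have hrow := EuclideanSpace.norm_sq_toLp_vecMul hA (fun i => (e i : ℝ))
  rw [hp _ (hnearest e he), ← hp _ (hnearest 0 fun _ => Or.inl rfl)] at hrow
  simp [e, dotProduct, Pi.single_apply, ← Pi.zero_def] at hrow
  exact hm.ne' (by exact_mod_cast hrow.symm)

theorem stmt7 {L : ℕ} (hL : 1 ≤ L) (K : Matrix (Fin L) (Fin L) ℤ) (m : ℕ)
    (hm : 0 < m) (hmEven : Even m)
    (hK : K * K.transpose = (m : ℤ) • (1 : Matrix (Fin L) (Fin L) ℤ)) :
    (∀ P : Fin L → ℝ, (∀ i, P i = 1 / 2 ∨ P i = -(1 / 2)) →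
      ∀ j, ∃ n : ℤ, Matrix.vecMul P (K.map (Int.cast : ℤ → ℝ)) j = (n : ℝ)) ∧
    ¬ IsClean (Zlat L) (rowLattice K) := by
  refine ⟨fun P hP => ?_, not_isClean_Zlat_rowLattice hL hm hmEven hK⟩
  have hhole : IsDeepHole P := fun i => (hP i).elim
    (fun h => ⟨1, odd_one, by rw [h]; norm_num⟩) (fun h => ⟨-1, by decide, by rw [h]; norm_num⟩)
  exact hhole.exists_intCast_eq_vecMul (by exact_mod_cast hm.ne') hmEven.natCast hK
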